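/- arXiv:1310.6268 — 4 statements merged into one kernel-verified Lean document; each statement's English description precedes it below -/
import Mathlib

section
/- Let b : R^n → R be Lipschitz with constant L and let K satisfy the size estimate |K(x,y,z)| ≤ C(|x-y|+|x-z|)^{-2n}. Then for every x ∈ R^n, δ > 0, and nonnegative measurable f, g: ∬_{max(|x-y|,|x-z|) ≤ 2δ} |b(y)-b(x)| |K(x,y,z)| f(y) g(z) dy dz ≤ C' L δ · M(f,g)(x), where M is the bilinear maximal function and C' depends only on n and C. -/
open MeasureTheory Set Filter

noncomputable section

/-- A (closed axis-parallel) cube in `ℝⁿ`. -/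
def IsCube {n : ℕ} (Q : Set (Fin n → ℝ)) : Prop :=
  ∃ (c : Fin n → ℝ) (h : ℝ), 0 < h ∧ Q = Set.Icc c (fun i => c i + h)

/-- The average of `f` over `Q`. -/
def avg {n : ℕ} (Q : Set (Fin n → ℝ)) (f : (Fin n → ℝ) → ℝ) : ℝ :=
  (MeasureTheory.volume Q).toReal⁻¹ * ∫ x in Q, f x

/-- The `A_p` ratio of the weight `w` on the cube `Q`. -/
def apRatio {n : ℕ} (p : ℝ) (w : (Fin n → ℝ) → ℝ) (Q : Set (Fin n → ℝ)) : ℝ :=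
  avg Q w * (avg Q (fun x => w x ^ (1 - p / (p - 1)))) ^ (p - 1)

/-- The Muckenhoupt `A_p` constant of `w`. -/
def apConst {n : ℕ} (p : ℝ) (w : (Fin n → ℝ) → ℝ) : ℝ :=
  sSup {r : ℝ | ∃ Q, IsCube Q ∧ r = apRatio p w Q}

/-- `w` is a Muckenhoupt `A_p` weight on `ℝⁿ`. -/
def IsAp {n : ℕ} (p : ℝ) (w : (Fin n → ℝ) → ℝ) : Prop :=
  (∀ x, 0 ≤ w x) ∧ MeasureTheory.LocallyIntegrable w MeasureTheory.volume ∧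
    BddAbove {r : ℝ | ∃ Q, IsCube Q ∧ r = apRatio p w Q}

/-- Average of an `ENNReal`-valued function over a set. -/
def avgE {n : ℕ} (Q : Set (Fin n → ℝ)) (f : (Fin n → ℝ) → ENNReal) : ENNReal :=
  (∫⁻ x in Q, f x) / MeasureTheory.volume Q

/-- The bilinear maximal function `M(f,g)(x) = sup_{Q ∋ x} (⨍_Q |f|)(⨍_Q |g|)`. -/
def bmaxFn {n : ℕ} (f g : (Fin n → ℝ) → ℝ) (x : Fin n → ℝ) : ENNReal :=
  ⨆ (Q : Set (Fin n → ℝ)) (_ : IsCube Q ∧ x ∈ Q),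
    avgE Q (fun y => ENNReal.ofReal |f y|) * avgE Q (fun z => ENNReal.ofReal |g z|)

/-- An interval (one-dimensional cube) in `ℝ`. -/
def IsCubeR (Q : Set ℝ) : Prop := ∃ a h : ℝ, 0 < h ∧ Q = Set.Icc a (a + h)

/-- Average over a subset of `ℝ`. -/
def avgR (Q : Set ℝ) (f : ℝ → ℝ) : ℝ :=
  (MeasureTheory.volume Q).toReal⁻¹ * ∫ x in Q, f x

/-- The `A_p` ratio on an interval. -/
def apRatioR (p : ℝ) (w : ℝ → ℝ) (Q : Set ℝ) : ℝ :=
  avgR Q w * (avgR Q (fun x => w x ^ (1 - p / (p - 1)))) ^ (p - 1)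

/-- `w` is a Muckenhoupt `A_p` weight on `ℝ`. -/
def IsApR (p : ℝ) (w : ℝ → ℝ) : Prop :=
  (∀ x, 0 ≤ w x) ∧ MeasureTheory.LocallyIntegrable w MeasureTheory.volume ∧
    BddAbove {r : ℝ | ∃ Q, IsCubeR Q ∧ r = apRatioR p w Q}

/-- `w` is an `A_1` weight on `ℝ`: the average over any interval is dominated by `C w`
a.e. on that interval. -/
def IsA1R (w : ℝ → ℝ) : Prop :=
  (∀ x, 0 ≤ w x) ∧ MeasureTheory.LocallyIntegrable w MeasureTheory.volume ∧
    ∃ C : ℝ, ∀ a h : ℝ, 0 < h → ∀ᵐ x ∂MeasureTheory.volume,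
      x ∈ Set.Icc a (a + h) → h⁻¹ * ∫ t in Set.Icc a (a + h), w t ≤ C * w x


/-- for Lipschitz `b` and a CZ-size kernel `K`, the local part of the commutator
kernel integral over `max(|x-y|,|x-z|) ≤ 2δ` is bounded by `C' L δ · M(f,g)(x)`. -/
theorem stmt4 (n : ℕ) (C : ℝ) (hC : 0 < C) :
    ∃ C' : ℝ, 0 < C' ∧
      ∀ (b : (Fin n → ℝ) → ℝ) (L : ℝ), 0 ≤ L →
        (∀ x y : Fin n → ℝ, |b y - b x| ≤ L * ‖y - x‖) →
        ∀ K : (Fin n → ℝ) → (Fin n → ℝ) → (Fin n → ℝ) → ℝ,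
          (∀ x y z : Fin n → ℝ, 0 < max ‖x - y‖ ‖x - z‖ →
            |K x y z| ≤ C * (‖x - y‖ + ‖x - z‖) ^ (-(2 * n : ℝ))) →
          ∀ x : Fin n → ℝ, ∀ δ : ℝ, 0 < δ → ∀ f g : (Fin n → ℝ) → ℝ,
            Measurable f → Measurable g → (∀ y, 0 ≤ f y) → (∀ z, 0 ≤ g z) →
            (∫⁻ y, ∫⁻ z in {z : Fin n → ℝ | max ‖x - y‖ ‖x - z‖ ≤ 2 * δ},
                ENNReal.ofReal (|b y - b x| * |K x y z| * f y * g z)) ≤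
              ENNReal.ofReal (C' * L * δ) * bmaxFn f g x := by
  refine ⟨4 ^ (2 * n + 1) * C, by positivity, ?_⟩
  intro b L hL hb K hK x δ hδ f g hf hg hf0 hg0
  -- radii
  set r : ℕ → ℝ := fun j => 2 * δ / 2 ^ j with hr
  have hrpos : ∀ j, 0 < r j := fun j => by positivity
  -- cubes
  set Q : ℕ → Set (Fin n → ℝ) :=
    fun j => Icc (fun i => x i - r j) (fun i => (x i - r j) + 2 * r j) with hQdef
  have hQcube : ∀ j, IsCube (Q j) := fun j => ⟨_, 2 * r j, by positivity, rfl⟩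
  have hxQ : ∀ j, x ∈ Q j := fun j => by
    constructor <;> intro i <;> simp only <;> nlinarith [hrpos j]
  have hQmeas : ∀ j, MeasurableSet (Q j) := fun j => measurableSet_Icc
  have hQmem : ∀ (j : ℕ) (y : Fin n → ℝ), ‖x - y‖ ≤ r j → y ∈ Q j := by
    intro j y hy
    rw [pi_norm_le_iff_of_nonneg (hrpos j).le] at hy
    constructor <;> intro i <;>
      · have := hy i
        rw [Pi.sub_apply, Real.norm_eq_abs, abs_le] at this
        simp only
        linarith [this.1, this.2]
  have hvol : ∀ j, volume (Q j) = ENNReal.ofReal (2 * r j) ^ n := by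
    intro j
    rw [hQdef]
    rw [Real.volume_Icc_pi]
    simp [Finset.prod_const]
  -- the per-annulus constants
  set B : ℕ → ENNReal :=
    fun j => ENNReal.ofReal (L * r j * (C * r (j + 1) ^ (-(2 * (n : ℝ))))) with hB
  have hBnn : ∀ j, 0 ≤ L * r j * (C * r (j + 1) ^ (-(2 * (n : ℝ)))) := by
    intro j
    have := Real.rpow_nonneg (hrpos (j + 1)).le (-(2 * (n : ℝ)))
    positivity
  -- the dominating function
  set G : (Fin n → ℝ) → (Fin n → ℝ) → ENNReal := fun y z =>
    ∑' j, B j * (Q j).indicator (fun y => ENNReal.ofReal (f y)) y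
      * (Q j).indicator (fun z => ENNReal.ofReal (g z)) z with hG
  have hGmeas : ∀ y, Measurable (fun z => G y z) := by
    intro y
    apply Measurable.ennreal_tsum
    intro j
    exact ((hg.ennreal_ofReal).indicator (hQmeas j)).const_mul _
  -- pointwise bound on the region
  have key : ∀ y : Fin n → ℝ, ∀ z ∈ {z : Fin n → ℝ | max ‖x - y‖ ‖x - z‖ ≤ 2 * δ},
      ENNReal.ofReal (|b y - b x| * |K x y z| * f y * g z) ≤ G y z := by
    intro y z hz
    simp only [mem_setOf_eq] at hz
    set m := max ‖x - y‖ ‖x - z‖ with hm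
    have hm0 : 0 ≤ m := le_max_of_le_left (norm_nonneg _)
    rcases eq_or_lt_of_le hm0 with hm0' | hm0'
    · -- m = 0 : the integrand vanishes
      have hby : |b y - b x| ≤ 0 := by
        have h1 := hb x y
        have h2 : ‖y - x‖ ≤ m := by
          rw [← norm_neg, neg_sub]; exact le_max_left _ _
        nlinarith
      have : |b y - b x| = 0 := le_antisymm hby (abs_nonneg _)
      rw [this]
      simp
    · -- find the annulus index
      have hex : ∃ j : ℕ, r (j + 1) < m := by
        obtain ⟨j, hj⟩ := pow_unbounded_of_one_lt (2 * δ / m) (one_lt_two (α := ℝ))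
        refine ⟨j, ?_⟩
        rw [hr]
        rw [div_lt_iff₀ (by positivity)] at hj ⊢
        calc 2 * δ < 2 ^ j * m := hj
        _ = m * 2 ^ j := mul_comm _ _
        _ ≤ m * 2 ^ (j + 1) := by
            have : (2:ℝ) ^ j ≤ 2 ^ (j+1) := by
              apply pow_le_pow_right₀ one_le_two (Nat.le_succ j)
            nlinarith
      set j := Nat.find hex with hj
      have hjlt : r (j + 1) < m := Nat.find_spec hex
      have hjle : m ≤ r j := by
        match hj' : j with
        | 0 => simpa [hr] using hz
        | k + 1 =>
          have := Nat.find_min hex (m := k) (by omega)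
          push_neg at this
          exact this
      -- memberships
      have hyQ : y ∈ Q j := hQmem j y (le_trans (le_trans (le_max_left _ _) hjle) le_rfl)
      have hzQ : z ∈ Q j := hQmem j z (le_trans (le_trans (le_max_right _ _) hjle) le_rfl)
      -- real inequality
      have hsum : r (j + 1) < ‖x - y‖ + ‖x - z‖ := by
        rcases max_cases ‖x - y‖ ‖x - z‖ with ⟨h1, h2⟩ | ⟨h1, h2⟩ <;>
          · rw [hm, h1] at hjlt; have := norm_nonneg (x - z); have := norm_nonneg (x - y); linarith
      have hKb : |K x y z| ≤ C * r (j + 1) ^ (-(2 * (n : ℝ))) := by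
        refine le_trans (hK x y z hm0') ?_
        have : (‖x - y‖ + ‖x - z‖) ^ (-(2 * (n : ℝ))) ≤ r (j + 1) ^ (-(2 * (n : ℝ))) :=
          Real.rpow_le_rpow_of_nonpos (hrpos (j+1)) hsum.le (neg_nonpos.mpr (by positivity))
        nlinarith [Real.rpow_nonneg (hrpos (j+1)).le (-(2 * (n : ℝ)))]
      have hbb : |b y - b x| ≤ L * r j := by
        refine le_trans (hb x y) ?_
        have h2 : ‖y - x‖ ≤ r j := by
          rw [← norm_neg, neg_sub]
          exact le_trans (le_max_left _ _) hjle
        nlinarith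
      have hreal : |b y - b x| * |K x y z| * f y * g z ≤
          (L * r j * (C * r (j + 1) ^ (-(2 * (n : ℝ))))) * f y * g z := by
        have h1 : |b y - b x| * |K x y z| ≤ (L * r j) * (C * r (j + 1) ^ (-(2 * (n : ℝ)))) := by
          apply mul_le_mul hbb hKb (abs_nonneg _)
          positivity
        have := hf0 y; have := hg0 z
        have h2 : |b y - b x| * |K x y z| * f y ≤
            (L * r j) * (C * r (j + 1) ^ (-(2 * (n : ℝ)))) * f y :=
          mul_le_mul_of_nonneg_right h1 (hf0 y)
        calc |b y - b x| * |K x y z| * f y * g z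
            ≤ (L * r j) * (C * r (j + 1) ^ (-(2 * (n : ℝ)))) * f y * g z :=
              mul_le_mul_of_nonneg_right h2 (hg0 z)
        _ = _ := by ring
      calc ENNReal.ofReal (|b y - b x| * |K x y z| * f y * g z)
          ≤ ENNReal.ofReal ((L * r j * (C * r (j + 1) ^ (-(2 * (n : ℝ))))) * f y * g z) :=
            ENNReal.ofReal_le_ofReal hreal
        _ = B j * (Q j).indicator (fun y => ENNReal.ofReal (f y)) y
            * (Q j).indicator (fun z => ENNReal.ofReal (g z)) z := by
            rw [Set.indicator_of_mem hyQ, Set.indicator_of_mem hzQ, hB]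
            rw [ENNReal.ofReal_mul (mul_nonneg (hBnn j) (hf0 y)), ENNReal.ofReal_mul (hBnn j)]
        _ ≤ G y z := ENNReal.le_tsum j
  -- main chain
  have step1 : (∫⁻ y, ∫⁻ z in {z : Fin n → ℝ | max ‖x - y‖ ‖x - z‖ ≤ 2 * δ},
      ENNReal.ofReal (|b y - b x| * |K x y z| * f y * g z)) ≤ ∫⁻ y, ∫⁻ z, G y z := by
    refine lintegral_mono fun y => ?_
    refine le_trans (setLIntegral_mono (hGmeas y) (key y)) (setLIntegral_le_lintegral _ _)
  refine le_trans step1 ?_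
  -- compute ∫∫ G
  have hIg : ∀ j y, (∫⁻ z, B j * (Q j).indicator (fun y => ENNReal.ofReal (f y)) y
      * (Q j).indicator (fun z => ENNReal.ofReal (g z)) z) =
      B j * (Q j).indicator (fun y => ENNReal.ofReal (f y)) y
        * ∫⁻ z in Q j, ENNReal.ofReal (g z) := by
    intro j y
    rw [lintegral_const_mul _ ((hg.ennreal_ofReal).indicator (hQmeas j)),
      lintegral_indicator (hQmeas j)]
  have step2 : (∫⁻ y, ∫⁻ z, G y z) =
      ∑' j, B j * (∫⁻ y in Q j, ENNReal.ofReal (f y)) * (∫⁻ z in Q j, ENNReal.ofReal (g z)) := by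
    have inner : ∀ y, (∫⁻ z, G y z) = ∑' j, B j
        * (Q j).indicator (fun y => ENNReal.ofReal (f y)) y
        * ∫⁻ z in Q j, ENNReal.ofReal (g z) := by
      intro y
      rw [hG]
      rw [lintegral_tsum fun j =>
        (((hg.ennreal_ofReal).indicator (hQmeas j)).const_mul _).aemeasurable]
      exact tsum_congr fun j => hIg j y
    simp only [inner]
    rw [lintegral_tsum]
    · refine tsum_congr fun j => ?_
      have : (fun y => B j * (Q j).indicator (fun y => ENNReal.ofReal (f y)) y
          * ∫⁻ z in Q j, ENNReal.ofReal (g z)) =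
          (fun y => (B j * ∫⁻ z in Q j, ENNReal.ofReal (g z))
            * (Q j).indicator (fun y => ENNReal.ofReal (f y)) y) := by
        funext y; ring
      rw [this, lintegral_const_mul _ ((hf.ennreal_ofReal).indicator (hQmeas j)),
        lintegral_indicator (hQmeas j)]
      ring
    · intro j
      exact (((hf.ennreal_ofReal).indicator (hQmeas j)).const_mul _).mul_const _ |>.aemeasurable
  rw [step2]
  -- bound each term by (B j * vol^2) * bmaxFn
  have hvolne : ∀ j, volume (Q j) ≠ 0 := by
    intro j
    rw [hvol j]
    apply pow_ne_zero
    simp [ENNReal.ofReal_eq_zero, not_le]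
    nlinarith [hrpos j]
  have hvolnt : ∀ j, volume (Q j) ≠ ⊤ := by
    intro j
    rw [hvol j]
    exact ENNReal.pow_ne_top ENNReal.ofReal_ne_top
  have habsf : (fun y => ENNReal.ofReal |f y|) = fun y => ENNReal.ofReal (f y) := by
    funext y; rw [abs_of_nonneg (hf0 y)]
  have habsg : (fun z => ENNReal.ofReal |g z|) = fun z => ENNReal.ofReal (g z) := by
    funext z; rw [abs_of_nonneg (hg0 z)]
  have hterm : ∀ j, B j * (∫⁻ y in Q j, ENNReal.ofReal (f y))
      * (∫⁻ z in Q j, ENNReal.ofReal (g z)) ≤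
      (B j * volume (Q j) ^ 2) * bmaxFn f g x := by
    intro j
    have hf' : (∫⁻ y in Q j, ENNReal.ofReal (f y)) =
        avgE (Q j) (fun y => ENNReal.ofReal |f y|) * volume (Q j) := by
      rw [habsf, avgE, ENNReal.div_mul_cancel (hvolne j) (hvolnt j)]
    have hg' : (∫⁻ z in Q j, ENNReal.ofReal (g z)) =
        avgE (Q j) (fun z => ENNReal.ofReal |g z|) * volume (Q j) := by
      rw [habsg, avgE, ENNReal.div_mul_cancel (hvolne j) (hvolnt j)]
    rw [hf', hg']
    have hle : avgE (Q j) (fun y => ENNReal.ofReal |f y|)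
        * avgE (Q j) (fun z => ENNReal.ofReal |g z|) ≤ bmaxFn f g x := by
      rw [bmaxFn]
      exact le_iSup₂_of_le (Q j) ⟨hQcube j, hxQ j⟩ le_rfl
    calc B j * (avgE (Q j) (fun y => ENNReal.ofReal |f y|) * volume (Q j))
        * (avgE (Q j) (fun z => ENNReal.ofReal |g z|) * volume (Q j))
        = (B j * volume (Q j) ^ 2) * (avgE (Q j) (fun y => ENNReal.ofReal |f y|)
          * avgE (Q j) (fun z => ENNReal.ofReal |g z|)) := by ring
      _ ≤ (B j * volume (Q j) ^ 2) * bmaxFn f g x := mul_le_mul_right hle _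
  refine le_trans (ENNReal.tsum_le_tsum hterm) ?_
  rw [ENNReal.tsum_mul_right]
  refine mul_le_mul_left ?_ _
  -- sum the geometric series
  have hterm2 : ∀ j, B j * volume (Q j) ^ 2 =
      ENNReal.ofReal (2 * C * L * δ * 4 ^ (2 * n)) * ENNReal.ofReal (1 / 2) ^ j := by
    intro j
    rw [hvol j, ← pow_mul, ← ENNReal.ofReal_pow (by positivity), hB,
      ← ENNReal.ofReal_mul (hBnn j), ← ENNReal.ofReal_pow (by norm_num),
      ← ENNReal.ofReal_mul (by positivity)]
    congr 1
    have hrj : r (j + 1) = δ / 2 ^ j := by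
      rw [hr]; simp only; rw [pow_succ]; ring
    have hrpow : r (j + 1) ^ (-(2 * (n : ℝ))) = ((δ / 2 ^ j) ^ (2 * n) : ℝ)⁻¹ := by
      rw [hrj]
      rw [show (-(2 * (n : ℝ))) = -((2 * n : ℕ) : ℝ) by push_cast; ring]
      rw [Real.rpow_neg (by positivity), Real.rpow_natCast]
    have h2rj : 2 * r j = 4 * (δ / 2 ^ j) := by
      rw [hr]; simp only; ring
    have hrj2 : r j = 2 * (δ / 2 ^ j) := by
      rw [hr]; simp only; ring
    have hd : (0:ℝ) < δ / 2 ^ j := by positivity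
    have key2 : ∀ d : ℝ, 0 < d →
        L * (2 * d) * (C * ((d ^ (2 * n) : ℝ))⁻¹) * (4 * d) ^ (n * 2)
          = 2 * C * L * (4:ℝ) ^ (2 * n) * d := by
      intro d hd
      have ha : (d ^ (2 * n) : ℝ) ≠ 0 := pow_ne_zero _ hd.ne'
      rw [mul_pow, show n * 2 = 2 * n from mul_comm n 2]
      field_simp
    rw [hrpow, h2rj, hrj2, key2 _ hd]
    have h12 : ((1:ℝ) / 2) ^ j = ((2:ℝ) ^ j)⁻¹ := by rw [one_div, inv_pow]
    rw [h12]
    ring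
  calc ∑' j, B j * volume (Q j) ^ 2
      = ENNReal.ofReal (2 * C * L * δ * 4 ^ (2 * n)) * ∑' j : ℕ, ENNReal.ofReal (1 / 2) ^ j := by
        simp only [hterm2]; rw [ENNReal.tsum_mul_left]
    _ = ENNReal.ofReal (2 * C * L * δ * 4 ^ (2 * n)) * 2 := by
        congr 1
        rw [ENNReal.tsum_geometric]
        rw [show ENNReal.ofReal (1 / 2) = 2⁻¹ by
          rw [one_div, ENNReal.ofReal_inv_of_pos two_pos]; norm_num]
        rw [ENNReal.one_sub_inv_two, inv_inv]
    _ = ENNReal.ofReal (4 ^ (2 * n + 1) * C * L * δ) := by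
        rw [show (2:ENNReal) = ENNReal.ofReal 2 by norm_num,
          ← ENNReal.ofReal_mul (by positivity)]
        congr 1
        rw [pow_succ]
        ring
    _ ≤ ENNReal.ofReal (4 ^ (2 * n + 1) * C * L * δ) := le_rfl
end
end

section
/- On R, let w1(x) = |x|^{-α} with 1 < α < 1 + p1/p2 and w2(x) = 1, where p1, p2 ∈ (1,∞) and 1/p = 1/p1 + 1/p2 with p > 1. Then w1 is not locally integrable on R (hence w1 is not in any Muckenhoupt class A_q), but ν_w(x) = |x|^{-αp/p1} is an A_1 weight on R. -/
open MeasureTheory Set Filter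

noncomputable section

/-!
For `r ≤ -1` the weight `|x| ^ r` is not integrable near the origin. For `0 ≤ β < 1` and an
interval `I = [a, a + h]`, put `M = max |a| |a + h|`; since `|x| ≤ M` on `I`, the `A_1` bound
reduces to `∫_I |t| ^ (-β) ≲ h M ^ (-β)`. If `M ≤ 2h`, compare with the integral over
`[-M, M]`, which is `2 M ^ (1 - β) / (1 - β)`; if `M > 2h`, then `|t| ≥ M / 2` on `I`.
The relation `1/p = 1/p₁ + 1/p₂` turns `α < 1 + p₁/p₂` into `α p / p₁ < 1`.
-/

namespace Real

theorem locallyIntegrable_abs_rpow {r : ℝ} (hr : -1 < r) :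
    LocallyIntegrable (fun x : ℝ => |x| ^ r) volume := by
  refine locallyIntegrable_of_norm_le_rpow (C := 1) (α := -r) (by simp) (by simp; linarith)
    (Eventually.of_forall fun x => ?_)
    (continuous_abs.measurable.pow_const r).aestronglyMeasurable
  simp [abs_of_nonneg (rpow_nonneg (abs_nonneg x) r)]

theorem not_locallyIntegrable_abs_rpow {r : ℝ} (hr : r ≤ -1) :
    ¬ LocallyIntegrable (fun x : ℝ => |x| ^ r) volume := by
  intro hloc
  have hIoo : IntegrableOn (fun x : ℝ => x ^ r) (Ioo 0 1) volume :=
    ((hloc.integrableOn_isCompact isCompact_Icc).mono_set Ioo_subset_Icc_self).congr_fun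
      (fun x hx => by simp only [abs_of_pos hx.1]) measurableSet_Ioo
  rw [intervalIntegral.integrableOn_Ioo_rpow_iff one_pos] at hIoo
  linarith

theorem integral_Icc_neg_abs_rpow {r M : ℝ} (hr : -1 < r) (hM : 0 ≤ M) :
    ∫ t in Icc (-M) M, |t| ^ r = 2 * M ^ (r + 1) / (r + 1) := by
  have hint (a b : ℝ) : IntervalIntegrable (fun x : ℝ => |x| ^ r) volume a b :=
    ((locallyIntegrable_abs_rpow hr).integrableOn_isCompact isCompact_uIcc).intervalIntegrable
  have hright : ∫ x in (0 : ℝ)..M, |x| ^ r = M ^ (r + 1) / (r + 1) := by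
    rw [intervalIntegral.integral_congr (g := fun x => x ^ r)
      (fun x hx => by simp only [abs_of_nonneg (uIcc_of_le hM ▸ hx).1]),
      integral_rpow (Or.inl hr), zero_rpow (by linarith), sub_zero]
  have hleft : ∫ x in (-M)..0, |x| ^ r = M ^ (r + 1) / (r + 1) := by
    simpa [hright] using (intervalIntegral.integral_comp_neg (a := 0) (b := M)
      (fun x : ℝ => |x| ^ r)).symm
  rw [integral_Icc_eq_integral_Ioc, ← intervalIntegral.integral_of_le (by linarith),
    ← intervalIntegral.integral_add_adjacent_intervals (hint _ 0) (hint 0 _), hleft, hright]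
  ring

theorem setIntegral_abs_rpow_le_of_subset_Icc {r M : ℝ} {s : Set ℝ} (hr : -1 < r) (hM : 0 ≤ M)
    (hs : s ⊆ Icc (-M) M) : ∫ t in s, |t| ^ r ≤ 2 * M ^ (r + 1) / (r + 1) := by
  rw [← integral_Icc_neg_abs_rpow hr hM]
  exact setIntegral_mono_set ((locallyIntegrable_abs_rpow hr).integrableOn_isCompact isCompact_Icc)
    (Eventually.of_forall fun x => rpow_nonneg (abs_nonneg x) r) hs.eventuallyLE

theorem max_abs_le_abs_add_of_mem_Icc {a b t : ℝ} (ht : t ∈ Icc a b) :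
    max |a| |b| ≤ |t| + (b - a) :=
  max_le (by cases abs_cases a <;> cases abs_cases t <;> linarith [ht.1, ht.2])
    (by cases abs_cases b <;> cases abs_cases t <;> linarith [ht.1, ht.2])

theorem setIntegral_Icc_abs_rpow_neg_le {β a h : ℝ} (hβ0 : 0 ≤ β) (hβ1 : β < 1) (hh : 0 < h) :
    ∫ t in Icc a (a + h), |t| ^ (-β) ≤ 4 / (1 - β) * h * max |a| |a + h| ^ (-β) := by
  set M := max |a| |a + h|
  have hM : h ≤ 2 * M := by
    cases abs_cases a <;> cases abs_cases (a + h) <;>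
      linarith [le_max_left |a| |a + h|, le_max_right |a| |a + h|]
  have hM0 : 0 < M := by linarith
  have hMβ : 0 < M ^ (-β) := rpow_pos_of_pos hM0 _
  have hβ : 0 < 1 - β := by linarith
  rcases le_or_gt M (2 * h) with hnear | hfar
  · calc ∫ t in Icc a (a + h), |t| ^ (-β)
        ≤ 2 * M ^ (-β + 1) / (-β + 1) :=
          setIntegral_abs_rpow_le_of_subset_Icc (by linarith) hM0.le fun t ht =>
            abs_le.1 (abs_le_max_abs_abs ht.1 ht.2)
      _ = 2 / (1 - β) * M * M ^ (-β) := by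
          rw [rpow_add hM0, rpow_one, neg_add_eq_sub]; ring
      _ ≤ 2 / (1 - β) * (2 * h) * M ^ (-β) := by gcongr
      _ = 4 / (1 - β) * h * M ^ (-β) := by ring
  · have hbound : ∀ t ∈ Icc a (a + h), ‖|t| ^ (-β)‖ ≤ 2 * M ^ (-β) := by
      intro t ht
      have hMt : M / 2 ≤ |t| := by linarith [max_abs_le_abs_add_of_mem_Icc ht]
      rw [norm_of_nonneg (rpow_nonneg (abs_nonneg t) _)]
      calc |t| ^ (-β) ≤ (M / 2) ^ (-β) := rpow_le_rpow_of_nonpos (by positivity) hMt (by linarith)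
        _ = 2 ^ β * M ^ (-β) := by
          rw [div_rpow hM0.le zero_le_two, rpow_neg zero_le_two]; field_simp
        _ ≤ 2 * M ^ (-β) := by
          gcongr
          simpa using rpow_le_rpow_of_exponent_le one_le_two hβ1.le
    calc ∫ t in Icc a (a + h), |t| ^ (-β)
        ≤ ‖∫ t in Icc a (a + h), |t| ^ (-β)‖ := le_abs_self _
      _ ≤ 2 * M ^ (-β) * h := by
          simpa [volume_real_Icc_of_le (by linarith : a ≤ a + h)] using
            norm_setIntegral_le_of_norm_le_const (μ := volume) measure_Icc_lt_top hbound
      _ ≤ 4 / (1 - β) * h * M ^ (-β) := by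
          have : 2 ≤ 4 / (1 - β) := by rw [le_div_iff₀ hβ]; linarith
          nlinarith [mul_le_mul_of_nonneg_right this (mul_pos hh hMβ).le]

end Real

theorem isA1R_abs_rpow_neg {β : ℝ} (hβ0 : 0 ≤ β) (hβ1 : β < 1) :
    IsA1R (fun x : ℝ => |x| ^ (-β)) := by
  refine ⟨fun x => Real.rpow_nonneg (abs_nonneg x) _,
    Real.locallyIntegrable_abs_rpow (by linarith), 4 / (1 - β), fun a h hh => ?_⟩
  -- `0 ^ (-β) = 0`, so the bound can only hold away from the origin.
  filter_upwards [compl_mem_ae_iff.2 (measure_singleton (0 : ℝ))] with x hx0 hx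
  have hmono : max |a| |a + h| ^ (-β) ≤ |x| ^ (-β) :=
    Real.rpow_le_rpow_of_nonpos (abs_pos.2 hx0) (abs_le_max_abs_abs hx.1 hx.2) (by linarith)
  calc h⁻¹ * ∫ t in Icc a (a + h), |t| ^ (-β)
      ≤ h⁻¹ * (4 / (1 - β) * h * max |a| |a + h| ^ (-β)) :=
        mul_le_mul_of_nonneg_left (Real.setIntegral_Icc_abs_rpow_neg_le hβ0 hβ1 hh) (by positivity)
    _ = 4 / (1 - β) * max |a| |a + h| ^ (-β) := by field_simp
    _ ≤ 4 / (1 - β) * |x| ^ (-β) := by gcongr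

theorem mul_div_lt_one_of_one_div_eq_add {p p₁ p₂ α : ℝ} (hp : 0 < p) (hp₁ : 0 < p₁)
    (hp₂ : 0 < p₂) (hsum : 1 / p = 1 / p₁ + 1 / p₂) (hα : α < 1 + p₁ / p₂) :
    α * p / p₁ < 1 := by
  have hprod : p * (p₁ + p₂) = p₁ * p₂ := by field_simp at hsum; linarith
  have hαp₂ : α * p₂ < p₂ + p₁ :=
    calc α * p₂ < (1 + p₁ / p₂) * p₂ := mul_lt_mul_of_pos_right hα hp₂
      _ = p₂ + p₁ := by field_simp
  rw [div_lt_one hp₁]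
  nlinarith [mul_lt_mul_of_pos_right hαp₂ hp]

theorem stmt6_general (p p1 p2 α : ℝ) (hp1 : 1 < p1) (hp2 : 1 < p2)
    (hsum : 1 / p = 1 / p1 + 1 / p2) (hα1 : 1 < α) (hα2 : α < 1 + p1 / p2) :
    ¬ MeasureTheory.LocallyIntegrable (fun x : ℝ => |x| ^ (-α)) MeasureTheory.volume ∧
    (∀ q : ℝ, 1 < q → ¬ IsApR q (fun x : ℝ => |x| ^ (-α))) ∧
    IsA1R (fun x : ℝ => |x| ^ (-(α * p / p1))) := by
  have hw₁ : ¬ LocallyIntegrable (fun x : ℝ => |x| ^ (-α)) volume :=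
    Real.not_locallyIntegrable_abs_rpow (by linarith)
  have hp : 0 < p := one_div_pos.1 (hsum ▸ by positivity)
  exact ⟨hw₁, fun _ _ hAp => hw₁ hAp.2.1, isA1R_abs_rpow_neg (by positivity)
    (mul_div_lt_one_of_one_div_eq_add hp (by linarith) (by linarith) hsum hα2)⟩

/-- on `ℝ`, `w1(x) = |x|^{-α}` with `1 < α < 1 + p1/p2` is not locally integrable
(hence in no `A_q` class), while `ν_w(x) = |x|^{-α p/p1}` is an `A_1` weight. -/
theorem stmt6 (p p1 p2 α : ℝ) (hp1 : 1 < p1) (hp2 : 1 < p2) (hp : 1 < p)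
    (hsum : 1 / p = 1 / p1 + 1 / p2) (hα1 : 1 < α) (hα2 : α < 1 + p1 / p2) :
    ¬ MeasureTheory.LocallyIntegrable (fun x : ℝ => |x| ^ (-α)) MeasureTheory.volume ∧
    (∀ q : ℝ, 1 < q → ¬ IsApR q (fun x : ℝ => |x| ^ (-α))) ∧
    IsA1R (fun x : ℝ => |x| ^ (-(α * p / p1))) :=
  stmt6_general p p1 p2 α hp1 hp2 hsum hα1 hα2
end
end

section
/- Let b ∈ C_c^∞(R^n) with supp b ⊂ B_A(0), and let K satisfy |K(x,y,z)| ≤ C(|x-y|+|x-z|)^{-2n}. Then for |x| ≥ 2A and |x| ≥ 1, and any measurable f, g: ∬ |b(y)-b(x)| |K(x,y,z)| |f(y)| |g(z)| 1_{supp b}(y) dy dz ≤ C' ‖b‖_∞ |x|^{-n} (∫_{B_A(0)} |f|) · ∫_{R^n} |g(z)| (1+|z|)^{-n} dz, with C' depending only on n, C. -/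
open MeasureTheory Set Filter

noncomputable section

/-- decay estimate for the first-order commutator kernel integral far from the
support of `b`. -/
theorem stmt8 (n : ℕ) (C : ℝ) (hC : 0 < C) :
    ∃ C' : ℝ, 0 < C' ∧
      ∀ A : ℝ, 0 < A → ∀ b : (Fin n → ℝ) → ℝ,
        ContDiff ℝ (⊤ : ℕ∞) b → HasCompactSupport b → tsupport b ⊆ Metric.ball 0 A →
        ∀ K : (Fin n → ℝ) → (Fin n → ℝ) → (Fin n → ℝ) → ℝ,
          (∀ x y z : Fin n → ℝ, 0 < max ‖x - y‖ ‖x - z‖ →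
            |K x y z| ≤ C * (‖x - y‖ + ‖x - z‖) ^ (-(2 * n : ℝ))) →
          ∀ x : Fin n → ℝ, 2 * A ≤ ‖x‖ → 1 ≤ ‖x‖ →
            ∀ f g : (Fin n → ℝ) → ℝ, Measurable f → Measurable g →
              (∫⁻ y in tsupport b, ∫⁻ z,
                  ENNReal.ofReal (|b y - b x| * |K x y z| * |f y| * |g z|)) ≤
                ENNReal.ofReal (C' * (⨆ y, |b y|) * ‖x‖ ^ (-(n : ℝ))) *
                  (∫⁻ y in Metric.ball (0 : Fin n → ℝ) A, ENNReal.ofReal |f y|) *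
                  ∫⁻ z, ENNReal.ofReal (|g z| * (1 + ‖z‖) ^ (-(n : ℝ))) := by
  refine ⟨C * 8 ^ n, by positivity, ?_⟩
  intro A hA b hb hbc hbs K hK x hx2A hx1 f g hf hg
  set S : ℝ := ⨆ y, |b y| with hS_def
  have hSb : ∀ y, |b y| ≤ S := by
    intro y
    exact le_ciSup ((hb.continuous.abs).bddAbove_range_of_hasCompactSupport hbc.abs) y
  have hS0 : 0 ≤ S := (abs_nonneg _).trans (hSb 0)
  have hbx : b x = 0 := by
    apply image_eq_zero_of_notMem_tsupport
    intro hmem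
    have := Metric.mem_ball.mp (hbs hmem)
    simp only [dist_zero_right] at this
    linarith
  have hx0 : (0:ℝ) < ‖x‖ := lt_of_lt_of_le one_pos hx1
  have hxn : (0:ℝ) < ‖x‖ ^ n := pow_pos hx0 n
  -- rpow conversions
  have hxrpow : ‖x‖ ^ (-(n : ℝ)) = (‖x‖ ^ n)⁻¹ := by
    rw [Real.rpow_neg hx0.le, Real.rpow_natCast]
  have hzrpow : ∀ z : Fin n → ℝ, (1 + ‖z‖) ^ (-(n : ℝ)) = ((1 + ‖z‖) ^ n)⁻¹ := by
    intro z
    rw [Real.rpow_neg (by positivity), Real.rpow_natCast]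
  set c₀ : ℝ := C * 8 ^ n * S * ‖x‖ ^ (-(n : ℝ)) with hc₀_def
  have hc₀0 : 0 ≤ c₀ := by
    rw [hc₀_def, hxrpow]; positivity
  set G : (Fin n → ℝ) → ENNReal := fun z => ENNReal.ofReal (|g z| * (1 + ‖z‖) ^ (-(n : ℝ))) with hG_def
  -- pointwise bound
  have key : ∀ y ∈ tsupport b, ∀ z : Fin n → ℝ,
      |b y - b x| * |K x y z| * |f y| * |g z| ≤
        c₀ * |f y| * (|g z| * (1 + ‖z‖) ^ (-(n : ℝ))) := by
    intro y hy z
    have hyA : ‖y‖ < A := by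
      have := Metric.mem_ball.mp (hbs hy)
      simpa [dist_zero_right] using this
    set r : ℝ := ‖x - y‖ + ‖x - z‖ with hr_def
    have hxy : ‖x‖ / 2 ≤ ‖x - y‖ := by
      have h1 : ‖x‖ - ‖y‖ ≤ ‖x - y‖ := norm_sub_norm_le x y
      linarith
    have hrx : ‖x‖ ≤ 2 * r := by
      have : (0:ℝ) ≤ ‖x - z‖ := norm_nonneg _
      simp only [hr_def]; linarith
    have hrz : 1 + ‖z‖ ≤ 4 * r := by
      have hz : ‖z‖ ≤ ‖x‖ + ‖x - z‖ := by
        have : ‖x - (x - z)‖ ≤ ‖x‖ + ‖x - z‖ := norm_sub_le _ _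
        simpa using this
      simp only [hr_def]; linarith
    have hr0 : (0:ℝ) < r := by
      have : (0:ℝ) ≤ ‖x - z‖ := norm_nonneg _
      simp only [hr_def]; linarith
    have hKb : |K x y z| ≤ C * r ^ (-(2 * n : ℝ)) := by
      apply hK
      have : (0:ℝ) < ‖x - y‖ := by linarith
      exact lt_max_of_lt_left this
    have hrpow : r ^ (-(2 * n : ℝ)) = (r ^ (2 * n))⁻¹ := by
      rw [show (-(2 * n : ℝ)) = -((2 * n : ℕ) : ℝ) by push_cast; ring,
        Real.rpow_neg hr0.le, Real.rpow_natCast]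
    -- main power inequality
    have hmain : ‖x‖ ^ n * (1 + ‖z‖) ^ n ≤ 8 ^ n * r ^ (2 * n) := by
      have h1 : ‖x‖ * (1 + ‖z‖) ≤ 8 * r ^ 2 := by nlinarith [hrx, hrz, hr0.le, hx0.le, norm_nonneg z]
      calc ‖x‖ ^ n * (1 + ‖z‖) ^ n = (‖x‖ * (1 + ‖z‖)) ^ n := (mul_pow _ _ _).symm
        _ ≤ (8 * r ^ 2) ^ n := by
            apply pow_le_pow_left₀ (by positivity) h1
        _ = 8 ^ n * r ^ (2 * n) := by rw [mul_pow, ← pow_mul]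
    have hinv : (r ^ (2 * n))⁻¹ ≤ 8 ^ n * ((‖x‖ ^ n)⁻¹ * ((1 + ‖z‖) ^ n)⁻¹) := by
      rw [← mul_inv]
      rw [inv_le_iff_one_le_mul₀ (by positivity)]
      have hpos : (0:ℝ) < ‖x‖ ^ n * (1 + ‖z‖) ^ n := by positivity
      calc (1:ℝ) = (‖x‖ ^ n * (1 + ‖z‖) ^ n)⁻¹ * (‖x‖ ^ n * (1 + ‖z‖) ^ n) :=
            (inv_mul_cancel₀ hpos.ne').symm
        _ ≤ (‖x‖ ^ n * (1 + ‖z‖) ^ n)⁻¹ * (8 ^ n * r ^ (2 * n)) := by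
            exact mul_le_mul_of_nonneg_left hmain (inv_nonneg.mpr hpos.le)
        _ = 8 ^ n * (‖x‖ ^ n * (1 + ‖z‖) ^ n)⁻¹ * r ^ (2 * n) := by ring
    have hKb2 : |K x y z| ≤ C * 8 ^ n * (‖x‖ ^ n)⁻¹ * ((1 + ‖z‖) ^ n)⁻¹ := by
      calc |K x y z| ≤ C * r ^ (-(2 * n : ℝ)) := hKb
        _ = C * (r ^ (2 * n))⁻¹ := by rw [hrpow]
        _ ≤ C * (8 ^ n * ((‖x‖ ^ n)⁻¹ * ((1 + ‖z‖) ^ n)⁻¹)) := by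
            exact mul_le_mul_of_nonneg_left hinv hC.le
        _ = C * 8 ^ n * (‖x‖ ^ n)⁻¹ * ((1 + ‖z‖) ^ n)⁻¹ := by ring
    have hby : |b y - b x| ≤ S := by rw [hbx, sub_zero]; exact hSb y
    calc |b y - b x| * |K x y z| * |f y| * |g z|
        ≤ S * (C * 8 ^ n * (‖x‖ ^ n)⁻¹ * ((1 + ‖z‖) ^ n)⁻¹) * |f y| * |g z| := by
          apply mul_le_mul_of_nonneg_right _ (abs_nonneg _)
          apply mul_le_mul_of_nonneg_right _ (abs_nonneg _)
          exact mul_le_mul hby hKb2 (abs_nonneg _) hS0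
      _ = c₀ * |f y| * (|g z| * (1 + ‖z‖) ^ (-(n : ℝ))) := by
          rw [hc₀_def, hxrpow, hzrpow]; ring
  -- lintegral chain
  set Ig : ENNReal := ∫⁻ z, G z with hIg_def
  calc (∫⁻ y in tsupport b, ∫⁻ z,
        ENNReal.ofReal (|b y - b x| * |K x y z| * |f y| * |g z|))
      ≤ ∫⁻ y in tsupport b, (ENNReal.ofReal c₀ * ENNReal.ofReal |f y|) * Ig := by
        apply setLIntegral_mono (by fun_prop) 
        intro y hy
        calc (∫⁻ z, ENNReal.ofReal (|b y - b x| * |K x y z| * |f y| * |g z|))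
            ≤ ∫⁻ z, (ENNReal.ofReal c₀ * ENNReal.ofReal |f y|) * G z := by
              apply lintegral_mono
              intro z
              calc ENNReal.ofReal (|b y - b x| * |K x y z| * |f y| * |g z|)
                  ≤ ENNReal.ofReal (c₀ * |f y| * (|g z| * (1 + ‖z‖) ^ (-(n : ℝ)))) :=
                    ENNReal.ofReal_le_ofReal (key y hy z)
                _ = (ENNReal.ofReal c₀ * ENNReal.ofReal |f y|) * G z := by
                    rw [ENNReal.ofReal_mul (by positivity), ENNReal.ofReal_mul hc₀0]
          _ = (ENNReal.ofReal c₀ * ENNReal.ofReal |f y|) * Ig :=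
              lintegral_const_mul' _ _ (by simp [ENNReal.mul_ne_top, ENNReal.ofReal_ne_top])
    _ = (ENNReal.ofReal c₀ * ∫⁻ y in tsupport b, ENNReal.ofReal |f y|) * Ig := by
        rw [lintegral_mul_const _ (by fun_prop),
          lintegral_const_mul' _ _ ENNReal.ofReal_ne_top]
    _ ≤ (ENNReal.ofReal c₀ * ∫⁻ y in Metric.ball (0 : Fin n → ℝ) A, ENNReal.ofReal |f y|) * Ig := by
        gcongr
    _ = ENNReal.ofReal (C * 8 ^ n * S * ‖x‖ ^ (-(n : ℝ))) *
          (∫⁻ y in Metric.ball (0 : Fin n → ℝ) A, ENNReal.ofReal |f y|) * Ig := by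
        rw [← hc₀_def]
end
end

section
/- For any x ∈ R^n, δ > 0, and nonnegative measurable f, g: ∬_{max(|x-y|,|x-z|) > δ/2} (|x-y|+|x-z|)^{-2n-1} f(y) g(z) dy dz ≤ C δ^{-1} M(f,g)(x), where M is the bilinear maximal function and C depends only on n. -/
open MeasureTheory Set Filter

noncomputable section

open scoped ENNReal

/-!
If `2^j δ / 2 ≤ max(‖x - y‖, ‖x - z‖) ≤ 2^j δ`, then `y` and `z` both lie in the ball
`Q_j = closedBall x (2^j δ)`, which is a cube because `Fin n → ℝ` carries the sup norm, and the
kernel is at most `(2^j δ / 2)^(-2n-1)`. So the integral is at most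
`∑ⱼ (2^j δ / 2)^(-2n-1) |Q_j|² M(f,g)(x) = ∑ⱼ 2^(4n+1) δ⁻¹ 2^(-j) M(f,g)(x)`,
which is `2^(4n+2) δ⁻¹ M(f,g)(x)`.
-/

lemma exists_two_pow_mul_near {δ m : ℝ} (hδ : 0 < δ) (hm : δ / 2 < m) :
    ∃ j : ℕ, 2 ^ j * δ / 2 ≤ m ∧ m ≤ 2 ^ j * δ := by
  obtain ⟨j, hjl, hju⟩ := exists_nat_pow_near (x := 2 * m / δ) (y := (2 : ℝ))
    (by rw [le_div_iff₀ hδ]; linarith) one_lt_two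
  refine ⟨j, ?_, ?_⟩
  · rw [le_div_iff₀ hδ] at hjl; linarith
  · rw [div_lt_iff₀ hδ, pow_succ] at hju; linarith

lemma indicator_rpow_norm_add_norm_le_tsum_closedBall {E : Type*} [SeminormedAddCommGroup E]
    {δ e : ℝ} (hδ : 0 < δ) (he : e ≤ 0) (F G : E → ℝ≥0∞) (x y z : E) :
    {z | δ / 2 < max ‖x - y‖ ‖x - z‖}.indicator
        (fun z => ENNReal.ofReal ((‖x - y‖ + ‖x - z‖) ^ e) * F y * G z) z ≤
      ∑' j : ℕ, ENNReal.ofReal ((2 ^ j * δ / 2) ^ e) *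
        (Metric.closedBall x (2 ^ j * δ)).indicator F y *
        (Metric.closedBall x (2 ^ j * δ)).indicator G z := by
  by_cases hz : z ∈ {z | δ / 2 < max ‖x - y‖ ‖x - z‖}
  · rw [indicator_of_mem hz]
    obtain ⟨j, hjl, hju⟩ := exists_two_pow_mul_near hδ hz
    have hy : y ∈ Metric.closedBall x (2 ^ j * δ) :=
      mem_closedBall_iff_norm'.2 ((le_max_left _ _).trans hju)
    have hz' : z ∈ Metric.closedBall x (2 ^ j * δ) :=
      mem_closedBall_iff_norm'.2 ((le_max_right _ _).trans hju)
    have hsum : 2 ^ j * δ / 2 ≤ ‖x - y‖ + ‖x - z‖ :=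
      hjl.trans (max_le (le_add_of_nonneg_right (norm_nonneg _))
        (le_add_of_nonneg_left (norm_nonneg _)))
    refine le_trans ?_ (ENNReal.le_tsum j)
    rw [indicator_of_mem hy, indicator_of_mem hz']
    exact mul_le_mul_left (mul_le_mul_left
      (ENNReal.ofReal_le_ofReal (Real.rpow_le_rpow_of_nonpos (by positivity) hsum he)) _) _
  · rw [indicator_of_notMem hz]
    exact zero_le

lemma lintegral_lintegral_tsum_indicator_mul {ι α β : Type*} [Countable ι]
    [MeasurableSpace α] [MeasurableSpace β] {μ : Measure α} {ν : Measure β}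
    (c : ι → ℝ≥0∞) {F : α → ℝ≥0∞} {G : β → ℝ≥0∞} (hF : Measurable F) (hG : Measurable G)
    {A : ι → Set α} {B : ι → Set β} (hA : ∀ j, MeasurableSet (A j))
    (hB : ∀ j, MeasurableSet (B j)) :
    ∫⁻ y, ∫⁻ z, ∑' j, c j * (A j).indicator F y * (B j).indicator G z ∂ν ∂μ =
      ∑' j, c j * (∫⁻ y in A j, F y ∂μ) * ∫⁻ z in B j, G z ∂ν := by
  have hinner (y : α) : ∫⁻ z, ∑' j, c j * (A j).indicator F y * (B j).indicator G z ∂ν =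
      ∑' j, c j * (A j).indicator F y * ∫⁻ z in B j, G z ∂ν := by
    rw [lintegral_tsum fun j => ((hG.indicator (hB j)).const_mul _).aemeasurable]
    congr 1 with j
    rw [lintegral_const_mul _ (hG.indicator (hB j)), lintegral_indicator (hB j)]
  rw [lintegral_congr hinner, lintegral_tsum fun j =>
    (((hF.indicator (hA j)).const_mul _).mul_const _).aemeasurable]
  congr 1 with j
  rw [lintegral_mul_const _ ((hF.indicator (hA j)).const_mul _),
    lintegral_const_mul _ (hF.indicator (hA j)), lintegral_indicator (hA j)]

lemma isCube_closedBall {n : ℕ} (x : Fin n → ℝ) {r : ℝ} (hr : 0 < r) :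
    IsCube (Metric.closedBall x r) := by
  refine ⟨fun i => x i - r, 2 * r, by positivity, ?_⟩
  rw [closedBall_pi x hr.le, ← pi_univ_Icc]
  congr 1 with i
  rw [Real.closedBall_eq_Icc]
  ring_nf

lemma IsCube.measure_ne_zero {n : ℕ} {Q : Set (Fin n → ℝ)} (hQ : IsCube Q) : volume Q ≠ 0 := by
  obtain ⟨c, h, hh, rfl⟩ := hQ
  simp [Real.volume_Icc_pi, hh]

lemma IsCube.measure_ne_top {n : ℕ} {Q : Set (Fin n → ℝ)} (hQ : IsCube Q) : volume Q ≠ ⊤ := by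
  obtain ⟨c, h, hh, rfl⟩ := hQ
  exact isCompact_Icc.measure_ne_top

lemma lintegral_mul_lintegral_le_bmaxFn {n : ℕ} {Q : Set (Fin n → ℝ)} {x : Fin n → ℝ}
    (hQ : IsCube Q) (hxQ : x ∈ Q) (f g : (Fin n → ℝ) → ℝ) :
    (∫⁻ y in Q, ENNReal.ofReal |f y|) * (∫⁻ z in Q, ENNReal.ofReal |g z|) ≤
      volume Q * volume Q * bmaxFn f g x := by
  have hint (h : (Fin n → ℝ) → ℝ) : ∫⁻ y in Q, ENNReal.ofReal |h y| =
      avgE Q (fun y => ENNReal.ofReal |h y|) * volume Q := by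
    rw [avgE, ENNReal.div_mul_cancel hQ.measure_ne_zero hQ.measure_ne_top]
  have hmax : avgE Q (fun y => ENNReal.ofReal |f y|) * avgE Q (fun z => ENNReal.ofReal |g z|) ≤
      bmaxFn f g x :=
    le_iSup₂_of_le (f := fun Q (_ : IsCube Q ∧ x ∈ Q) => _) Q ⟨hQ, hxQ⟩ le_rfl
  calc (∫⁻ y in Q, ENNReal.ofReal |f y|) * (∫⁻ z in Q, ENNReal.ofReal |g z|)
      = avgE Q (fun y => ENNReal.ofReal |f y|) * avgE Q (fun z => ENNReal.ofReal |g z|) *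
          (volume Q * volume Q) := by rw [hint f, hint g]; ring
    _ ≤ bmaxFn f g x * (volume Q * volume Q) := by gcongr
    _ = volume Q * volume Q * bmaxFn f g x := mul_comm _ _

lemma tsum_dyadic_rpow_mul_volume_closedBall_sq {n : ℕ} (x : Fin n → ℝ) {δ : ℝ} (hδ : 0 < δ) :
    ∑' j : ℕ, ENNReal.ofReal ((2 ^ j * δ / 2) ^ (-(2 * n : ℝ) - 1)) *
        (volume (Metric.closedBall x (2 ^ j * δ)) * volume (Metric.closedBall x (2 ^ j * δ))) =
      ENNReal.ofReal (2 ^ (4 * n + 2) / δ) := by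
  have hterm (j : ℕ) : (2 ^ j * δ / 2) ^ (-(2 * n : ℝ) - 1) * ((2 * (2 ^ j * δ)) ^ n) ^ 2 =
      2 ^ (4 * n + 1) / δ * 2⁻¹ ^ j := by
    rw [show -(2 * n : ℝ) - 1 = -((2 * n + 1 : ℕ) : ℝ) by push_cast; ring,
      Real.rpow_neg (by positivity), Real.rpow_natCast, inv_pow, ← div_eq_mul_inv, div_div,
      mul_comm δ]
    have ha : (0 : ℝ) < 2 ^ j * δ := by positivity
    generalize 2 ^ j * δ = a at ha ⊢
    rw [div_pow, inv_div, div_mul_eq_mul_div, div_eq_div_iff (by positivity) ha.ne']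
    ring
  have hsum : Summable fun j : ℕ => (2 : ℝ) ^ (4 * n + 1) / δ * 2⁻¹ ^ j :=
    (summable_geometric_of_lt_one (by norm_num) (by norm_num)).mul_left _
  have hterm_ennreal (j : ℕ) : ENNReal.ofReal ((2 ^ j * δ / 2) ^ (-(2 * n : ℝ) - 1)) *
      (volume (Metric.closedBall x (2 ^ j * δ)) * volume (Metric.closedBall x (2 ^ j * δ))) =
        ENNReal.ofReal (2 ^ (4 * n + 1) / δ * 2⁻¹ ^ j) := by
    rw [Real.volume_pi_closedBall x (by positivity), Fintype.card_fin,
      ← ENNReal.ofReal_mul (by positivity),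
      ← ENNReal.ofReal_mul (Real.rpow_nonneg (by positivity) _), ← sq, hterm]
  rw [tsum_congr hterm_ennreal, ← ENNReal.ofReal_tsum_of_nonneg (fun j => by positivity) hsum,
    tsum_mul_left, tsum_geometric_inv_two]
  ring_nf

/-- `∬_{max(|x-y|,|x-z|) > δ/2} (|x-y|+|x-z|)^{-2n-1} f(y)g(z) dy dz
≤ C δ^{-1} M(f,g)(x)`. -/
theorem stmt15 (n : ℕ) :
    ∃ C : ℝ, 0 < C ∧
      ∀ x : Fin n → ℝ, ∀ δ : ℝ, 0 < δ → ∀ f g : (Fin n → ℝ) → ℝ,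
        Measurable f → Measurable g → (∀ y, 0 ≤ f y) → (∀ z, 0 ≤ g z) →
        (∫⁻ y, ∫⁻ z in {z : Fin n → ℝ | δ / 2 < max ‖x - y‖ ‖x - z‖},
            ENNReal.ofReal ((‖x - y‖ + ‖x - z‖) ^ (-(2 * n : ℝ) - 1) * f y * g z)) ≤
          ENNReal.ofReal (C / δ) * bmaxFn f g x := by
  refine ⟨2 ^ (4 * n + 2), by positivity, fun x δ hδ f g hf hg hf0 hg0 => ?_⟩
  let c : ℕ → ℝ≥0∞ := fun j => ENNReal.ofReal ((2 ^ j * δ / 2) ^ (-(2 * n : ℝ) - 1))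
  let Q : ℕ → Set (Fin n → ℝ) := fun j => Metric.closedBall x (2 ^ j * δ)
  let F : (Fin n → ℝ) → ℝ≥0∞ := fun y => ENNReal.ofReal |f y|
  let G : (Fin n → ℝ) → ℝ≥0∞ := fun z => ENNReal.ofReal |g z|
  have hintegrand (y z : Fin n → ℝ) :
      ENNReal.ofReal ((‖x - y‖ + ‖x - z‖) ^ (-(2 * n : ℝ) - 1) * f y * g z) =
        ENNReal.ofReal ((‖x - y‖ + ‖x - z‖) ^ (-(2 * n : ℝ) - 1)) * F y * G z := by
    rw [ENNReal.ofReal_mul (mul_nonneg (Real.rpow_nonneg (by positivity) _) (hf0 y)),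
      ENNReal.ofReal_mul (Real.rpow_nonneg (by positivity) _)]
    simp only [F, G, abs_of_nonneg (hf0 y), abs_of_nonneg (hg0 z)]
  have hS (y : Fin n → ℝ) : MeasurableSet {z : Fin n → ℝ | δ / 2 < max ‖x - y‖ ‖x - z‖} :=
    measurableSet_lt measurable_const
      (measurable_const.max (measurable_const.sub measurable_id).norm)
  have hQ (j : ℕ) : MeasurableSet (Q j) := Metric.isClosed_closedBall.measurableSet
  calc _ ≤ ∫⁻ y, ∫⁻ z, ∑' j, c j * (Q j).indicator F y * (Q j).indicator G z := by
        refine lintegral_mono fun y => ?_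
        rw [← lintegral_indicator (hS y)]
        refine lintegral_mono fun z => ?_
        simp only [hintegrand]
        exact indicator_rpow_norm_add_norm_le_tsum_closedBall hδ
          (by linarith [(by positivity : (0 : ℝ) ≤ 2 * n)]) F G x y z
    _ = ∑' j, c j * (∫⁻ y in Q j, F y) * ∫⁻ z in Q j, G z :=
        lintegral_lintegral_tsum_indicator_mul c hf.abs.ennreal_ofReal hg.abs.ennreal_ofReal hQ hQ
    _ ≤ ∑' j, c j * (volume (Q j) * volume (Q j)) * bmaxFn f g x := by
        refine ENNReal.tsum_le_tsum fun j => ?_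
        rw [mul_assoc, mul_assoc]
        exact mul_le_mul_right (lintegral_mul_lintegral_le_bmaxFn
          (isCube_closedBall x (by positivity)) (Metric.mem_closedBall_self (by positivity)) f g) _
    _ = ENNReal.ofReal (2 ^ (4 * n + 2) / δ) * bmaxFn f g x := by
        rw [ENNReal.tsum_mul_right, tsum_dyadic_rpow_mul_volume_closedBall_sq x hδ]
end
end
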